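/- For any even positive integer p, the signed sum over all perfect matchings of the ordered set {1,...,p}, where the sign of a matching is (-1) raised to the number of interlacing (crossing) pairs, equals 1. -/
import Mathlib


open Finset
open scoped Classical

/-- Two blocks `e = {e.1, e.2}` (with `e.1 < e.2`) and `f` interlace iff exactly one
endpoint of `f` lies strictly between the endpoints of `e`. -/
def crossing {n : ℕ} (e f : Fin n × Fin n) : Prop :=
  (e.1 < f.1 ∧ f.1 < e.2 ∧ e.2 < f.2) ∨ (f.1 < e.1 ∧ e.1 < f.2 ∧ f.2 < e.2)

/-- A perfect matching of `{1, …, n}` (modeled as `Fin n`): a collection of ordered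
pairs (two-element blocks) that are pairwise disjoint and cover every point. -/
def IsPM {n : ℕ} (ζ : Finset (Fin n × Fin n)) : Prop :=
  (∀ e ∈ ζ, e.1 < e.2) ∧
  (∀ x : Fin n, ∃ e ∈ ζ, x = e.1 ∨ x = e.2) ∧
  (∀ e ∈ ζ, ∀ f ∈ ζ, e ≠ f → e.1 ≠ f.1 ∧ e.1 ≠ f.2 ∧ e.2 ≠ f.1 ∧ e.2 ≠ f.2)

/-- The finset of all perfect matchings of `Fin n`. -/
noncomputable def PMs (n : ℕ) : Finset (Finset (Fin n × Fin n)) :=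
  univ.filter IsPM

/-- The number of interlacing (crossing) pairs of blocks of a matching. -/
noncomputable def crossNum {n : ℕ} (ζ : Finset (Fin n × Fin n)) : ℕ :=
  ((ζ ×ˢ ζ).filter fun q => q.1.1 < q.2.1 ∧ crossing q.1 q.2).card

/-- The crossing parity `(-1)^ζ` of a matching. -/
noncomputable def msign {n : ℕ} (ζ : Finset (Fin n × Fin n)) : ℤ :=
  (-1) ^ (crossNum ζ)

namespace SPM

/-- The nested matching (0,1)(2,3)… -/
noncomputable def nested (m : ℕ) : Finset (Fin (2*m) × Fin (2*m)) :=
  (univ : Finset (Fin m)).image fun i =>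
    (⟨2*i.val, by have := i.isLt; omega⟩, ⟨2*i.val+1, by have := i.isLt; omega⟩)

lemma nested_form {m : ℕ} {e : Fin (2*m) × Fin (2*m)} (he : e ∈ nested m) :
    ∃ k, k < m ∧ (e.1 : ℕ) = 2*k ∧ (e.2 : ℕ) = 2*k+1 := by
  simp only [nested, mem_image, mem_univ, true_and] at he
  obtain ⟨i, hi⟩ := he
  exact ⟨i.val, i.isLt, by rw [← hi], by rw [← hi]⟩

lemma block_mem_nested {m k : ℕ} (hk : k < m) (h1 : 2*k < 2*m) (h2 : 2*k+1 < 2*m) :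
    ((⟨2*k, h1⟩ : Fin (2*m)), (⟨2*k+1, h2⟩ : Fin (2*m))) ∈ nested m := by
  simp only [nested, mem_image, mem_univ, true_and]
  exact ⟨⟨k, hk⟩, rfl⟩

lemma nested_adj {m : ℕ} {e : Fin (2*m) × Fin (2*m)} (he : e ∈ nested m) :
    (e.2 : ℕ) = (e.1 : ℕ) + 1 := by
  obtain ⟨k, _, h1, h2⟩ := nested_form he; omega

lemma isPM_nested (m : ℕ) : IsPM (nested m) := by
  refine ⟨?_, ?_, ?_⟩
  · intro e he
    obtain ⟨k, _, h1, h2⟩ := nested_form he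
    rw [Fin.lt_def]; omega
  · intro x
    have hx := x.isLt
    have hk : (x : ℕ) / 2 < m := by omega
    refine ⟨_, block_mem_nested hk (by omega) (by omega), ?_⟩
    rcases Nat.even_or_odd (x : ℕ) with ⟨c, hc⟩ | ⟨c, hc⟩
    · left; exact Fin.ext (show (x:ℕ) = 2*((x:ℕ)/2) by omega)
    · right; exact Fin.ext (show (x:ℕ) = 2*((x:ℕ)/2)+1 by omega)
  · intro e he f hf hne
    obtain ⟨k, _, h1, h2⟩ := nested_form he
    obtain ⟨l, _, h3, h4⟩ := nested_form hf
    have hkl : k ≠ l := by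
      intro h
      exact hne (Prod.ext (Fin.ext (by omega)) (Fin.ext (by omega)))
    refine ⟨?_, ?_, ?_, ?_⟩ <;> (intro h; have := congrArg Fin.val h; omega)

lemma crossNum_nested (m : ℕ) : crossNum (nested m) = 0 := by
  rw [crossNum, Finset.card_eq_zero, Finset.eq_empty_iff_forall_notMem]
  intro q hq
  rw [mem_filter, mem_product] at hq
  obtain ⟨⟨h1, h2⟩, _, hcr⟩ := hq
  obtain ⟨k, _, ha1, ha2⟩ := nested_form h1
  obtain ⟨l, _, hb1, hb2⟩ := nested_form h2
  rcases hcr with ⟨c1, c2, c3⟩ | ⟨c1, c2, c3⟩ <;>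
    (rw [Fin.lt_def] at c1 c2 c3; omega)

lemma eq_nested_of_adj {m : ℕ} {ζ : Finset (Fin (2*m) × Fin (2*m))} (hPM : IsPM ζ)
    (hadj : ∀ e ∈ ζ, (e.2 : ℕ) = (e.1 : ℕ) + 1) : ζ = nested m := by
  have key : ∀ k, k < m → ∀ (h1 : 2*k < 2*m) (h2 : 2*k+1 < 2*m),
      ((⟨2*k, h1⟩ : Fin (2*m)), (⟨2*k+1, h2⟩ : Fin (2*m))) ∈ ζ := by
    intro k
    induction k using Nat.strong_induction_on with
    | _ k IH =>
      intro hk h1 h2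
      obtain ⟨e, he, hx⟩ := hPM.2.1 ⟨2*k, h1⟩
      have hadje := hadj e he
      have heo := Fin.lt_def.mp (hPM.1 e he)
      rcases hx with hx | hx
      · have hv : (e.1 : ℕ) = 2*k := (congrArg Fin.val hx).symm
        have : e = (⟨2*k, h1⟩, ⟨2*k+1, h2⟩) :=
          Prod.ext (Fin.ext (show (e.1:ℕ) = 2*k by omega))
            (Fin.ext (show (e.2:ℕ) = 2*k+1 by omega))
        rw [← this]; exact he
      · have hv : (e.2 : ℕ) = 2*k := (congrArg Fin.val hx).symm
        have hk0 : k ≠ 0 := by omega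
        have hb := IH (k-1) (by omega) (by omega) (by omega) (by omega)
        have hbe : ((⟨2*(k-1), by omega⟩ : Fin (2*m)), (⟨2*(k-1)+1, by omega⟩ : Fin (2*m))) ≠ e := by
          intro h
          have := congrArg (fun p => (p.2 : ℕ)) h
          simp at this; omega
        have hd := (hPM.2.2 _ hb _ he hbe).2.2.1
        exact absurd (Fin.ext (by simp; omega)) hd
  apply Finset.Subset.antisymm
  · intro e he
    have hadje := hadj e he
    have heo := Fin.lt_def.mp (hPM.1 e he)
    have h2 : (e.2 : ℕ) < 2*m := e.2.isLt
    rcases Nat.even_or_odd (e.1 : ℕ) with ⟨k, hkk⟩ | ⟨k, hkk⟩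
    · have hkm : k < m := by omega
      have : e = (⟨2*k, by omega⟩, ⟨2*k+1, by omega⟩) :=
        Prod.ext (Fin.ext (show (e.1:ℕ) = 2*k by omega))
          (Fin.ext (show (e.2:ℕ) = 2*k+1 by omega))
      rw [this]; exact block_mem_nested hkm _ _
    · have hkm : k < m := by omega
      have hb := key k hkm (by omega) (by omega)
      have hbe : ((⟨2*k, by omega⟩ : Fin (2*m)), (⟨2*k+1, by omega⟩ : Fin (2*m))) ≠ e := by
        intro h
        have := congrArg (fun p => (p.1 : ℕ)) h
        simp at this; omega
      have hd := (hPM.2.2 _ hb _ he hbe).2.2.1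
      exact absurd (Fin.ext (by simp; omega)) hd
  · intro e he
    obtain ⟨k, hk, h1, h2⟩ := nested_form he
    have : e = (⟨2*k, by omega⟩, ⟨2*k+1, by omega⟩) :=
      Prod.ext (Fin.ext (show (e.1:ℕ) = 2*k by omega))
        (Fin.ext (show (e.2:ℕ) = 2*k+1 by omega))
    rw [this]; exact key k hk _ _

end SPM
section Part2
open Finset
namespace SPM

variable {n : ℕ} {ζ : Finset (Fin n × Fin n)} {A B : Fin n × Fin n}

/-- `A` is the block at the least position `u` with a non-adjacent partner,
and `B` is the block whose first element is `u+1`. -/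
def Spec (ζ : Finset (Fin n × Fin n)) (A B : Fin n × Fin n) : Prop :=
  A ∈ ζ ∧ B ∈ ζ ∧ (A.2 : ℕ) ≠ (A.1 : ℕ) + 1 ∧ (B.1 : ℕ) = (A.1 : ℕ) + 1 ∧
    ∀ e ∈ ζ, (e.2 : ℕ) ≠ (e.1 : ℕ) + 1 → (A.1 : ℕ) ≤ (e.1 : ℕ)

/-- The swapped matching: blocks (u,v),(u+1,w) are replaced by (u,w),(u+1,v). -/
def swapped (ζ : Finset (Fin n × Fin n)) (A B : Fin n × Fin n) :
    Finset (Fin n × Fin n) :=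
  insert (A.1, B.2) (insert (B.1, A.2) ((ζ.erase A).erase B))

lemma vne {a b : Fin n} (h : (a : ℕ) ≠ (b : ℕ)) : a ≠ b :=
  fun h2 => h (congrArg Fin.val h2)

lemma spec_unique (hPM : IsPM ζ) {A₂ B₂ : Fin n × Fin n} (h1 : Spec ζ A B)
    (h2 : Spec ζ A₂ B₂) : A = A₂ ∧ B = B₂ := by
  obtain ⟨hA1, hB1, hna1, hb1, hmin1⟩ := h1
  obtain ⟨hA2, hB2, hna2, hb2, hmin2⟩ := h2
  have hu : (A.1 : ℕ) = (A₂.1 : ℕ) :=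
    le_antisymm (hmin1 _ hA2 hna2) (hmin2 _ hA1 hna1)
  have hAA : A = A₂ := by
    by_contra hne
    exact (hPM.2.2 _ hA1 _ hA2 hne).1 (Fin.ext hu)
  have hBB : B = B₂ := by
    by_contra hne
    exact (hPM.2.2 _ hB1 _ hB2 hne).1 (Fin.ext (by omega))
  exact ⟨hAA, hBB⟩

lemma spec_facts (hPM : IsPM ζ) (hS : Spec ζ A B) :
    (A.1 : ℕ) + 2 ≤ (A.2 : ℕ) ∧ (B.1 : ℕ) = (A.1 : ℕ) + 1 ∧
      (A.1 : ℕ) + 2 ≤ (B.2 : ℕ) ∧ (A.2 : ℕ) ≠ (B.2 : ℕ) := by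
  obtain ⟨hA, hB, hna, hb1, hmin⟩ := hS
  have hAo := Fin.lt_def.mp (hPM.1 A hA)
  have hBo := Fin.lt_def.mp (hPM.1 B hB)
  have hAB : A ≠ B := by
    intro h; rw [h] at hb1; omega
  have hd := hPM.2.2 A hA B hB hAB
  have h22 : (A.2 : ℕ) ≠ (B.2 : ℕ) := fun h => hd.2.2.2 (Fin.ext h)
  exact ⟨by omega, hb1, by omega, h22⟩

lemma spec_AB_ne (hS : Spec ζ A B) : A ≠ B := by
  intro h
  have := hS.2.2.2.1
  rw [h] at this; omega

/-- Every other block lies entirely below `u` (and is adjacent), or entirely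
above `u+1`. -/
lemma spec_dich (hPM : IsPM ζ) (hS : Spec ζ A B) {C : Fin n × Fin n}
    (hC : C ∈ ζ) (hCA : C ≠ A) (hCB : C ≠ B) :
    ((C.2 : ℕ) = (C.1 : ℕ) + 1 ∧ (C.2 : ℕ) < (A.1 : ℕ)) ∨
      ((A.1 : ℕ) + 2 ≤ (C.1 : ℕ) ∧ (A.1 : ℕ) + 2 ≤ (C.2 : ℕ)) := by
  obtain ⟨hA, hB, hna, hb1, hmin⟩ := hS
  have hCo := Fin.lt_def.mp (hPM.1 C hC)
  have d1 := hPM.2.2 C hC A hA hCA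
  have d2 := hPM.2.2 C hC B hB hCB
  have n11 : (C.1 : ℕ) ≠ (A.1 : ℕ) := fun h => d1.1 (Fin.ext h)
  have n21 : (C.2 : ℕ) ≠ (A.1 : ℕ) := fun h => d1.2.2.1 (Fin.ext h)
  have n1B : (C.1 : ℕ) ≠ (B.1 : ℕ) := fun h => d2.1 (Fin.ext h)
  rcases lt_or_gt_of_ne n11 with h | h
  · left
    have hadj : (C.2 : ℕ) = (C.1 : ℕ) + 1 := by
      by_contra hcon
      exact absurd (hmin C hC hcon) (by omega)
    omega
  · right; omega

lemma mem_swapped {e : Fin n × Fin n} :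
    e ∈ swapped ζ A B ↔
      e = (A.1, B.2) ∨ e = (B.1, A.2) ∨ (e ∈ ζ ∧ e ≠ A ∧ e ≠ B) := by
  simp only [swapped, mem_insert, mem_erase]
  tauto

lemma new_notMem (hPM : IsPM ζ) (hS : Spec ζ A B) :
    (A.1, B.2) ∉ ζ ∧ (B.1, A.2) ∉ ζ := by
  obtain ⟨h2v, hB1, h2w, hvw⟩ := spec_facts hPM hS
  constructor
  · intro hmem
    have hne : (A.1, B.2) ≠ A := by
      intro h
      exact hvw (by rw [← congrArg (fun p => ((p.2 : Fin n) : ℕ)) h])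
    exact (hPM.2.2 _ hmem A hS.1 hne).1 rfl
  · intro hmem
    have hne : (B.1, A.2) ≠ B := by
      intro h
      exact hvw (by rw [← congrArg (fun p => ((p.2 : Fin n) : ℕ)) h])
    exact (hPM.2.2 _ hmem B hS.2.1 hne).1 rfl

lemma A_notMem_swapped (hPM : IsPM ζ) (hS : Spec ζ A B) :
    A ∉ swapped ζ A B ∧ B ∉ swapped ζ A B := by
  obtain ⟨h2v, hB1, h2w, hvw⟩ := spec_facts hPM hS
  constructor
  · intro hmem
    rcases mem_swapped.mp hmem with h | h | ⟨_, h1, h2⟩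
    · have h3 : (A.2 : ℕ) = (B.2 : ℕ) := congrArg (fun p => ((p.2 : Fin n) : ℕ)) h
      omega
    · have h3 : (A.1 : ℕ) = (B.1 : ℕ) := congrArg (fun p => ((p.1 : Fin n) : ℕ)) h
      omega
    · exact h1 rfl
  · intro hmem
    rcases mem_swapped.mp hmem with h | h | ⟨_, h1, h2⟩
    · have h3 : (B.1 : ℕ) = (A.1 : ℕ) := congrArg (fun p => ((p.1 : Fin n) : ℕ)) h
      omega
    · have h3 : (B.2 : ℕ) = (A.2 : ℕ) := congrArg (fun p => ((p.2 : Fin n) : ℕ)) h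
      omega
    · exact h2 rfl

lemma isPM_swapped (hPM : IsPM ζ) (hS : Spec ζ A B) : IsPM (swapped ζ A B) := by
  obtain ⟨h2v, hB1, h2w, hvw⟩ := spec_facts hPM hS
  have hA := hS.1
  have hB := hS.2.1
  refine ⟨?_, ?_, ?_⟩
  · intro e he
    rcases mem_swapped.mp he with h | h | ⟨h, _, _⟩
    · rw [h]; show A.1 < B.2; rw [Fin.lt_def]; omega
    · rw [h]; show B.1 < A.2; rw [Fin.lt_def]; omega
    · exact hPM.1 e h
  · intro x
    obtain ⟨e, he, hx⟩ := hPM.2.1 x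
    by_cases heA : e = A
    · rcases hx with hx | hx
      · exact ⟨(A.1, B.2), mem_swapped.mpr (Or.inl rfl), Or.inl (by rw [hx, heA])⟩
      · exact ⟨(B.1, A.2), mem_swapped.mpr (Or.inr (Or.inl rfl)), Or.inr (by rw [hx, heA])⟩
    by_cases heB : e = B
    · rcases hx with hx | hx
      · exact ⟨(B.1, A.2), mem_swapped.mpr (Or.inr (Or.inl rfl)), Or.inl (by rw [hx, heB])⟩
      · exact ⟨(A.1, B.2), mem_swapped.mpr (Or.inl rfl), Or.inr (by rw [hx, heB])⟩
    · exact ⟨e, mem_swapped.mpr (Or.inr (Or.inr ⟨he, heA, heB⟩)), hx⟩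
  · intro e he f hf hef
    have main : ∀ C ∈ ζ, C ≠ A → C ≠ B →
        (A.1 ≠ C.1 ∧ A.1 ≠ C.2 ∧ B.2 ≠ C.1 ∧ B.2 ≠ C.2) ∧
        (B.1 ≠ C.1 ∧ B.1 ≠ C.2 ∧ A.2 ≠ C.1 ∧ A.2 ≠ C.2) := by
      intro C hC hCA hCB
      have d1 := hPM.2.2 A hA C hC (fun h => hCA h.symm)
      have d2 := hPM.2.2 B hB C hC (fun h => hCB h.symm)
      exact ⟨⟨d1.1, d1.2.1, d2.2.2.1, d2.2.2.2⟩, ⟨d2.1, d2.2.1, d1.2.2.1, d1.2.2.2⟩⟩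
    have hAB' : A.1 ≠ B.1 ∧ A.1 ≠ A.2 ∧ B.2 ≠ B.1 ∧ B.2 ≠ A.2 :=
      ⟨vne (by omega), vne (by omega), vne (by omega), vne (by omega)⟩
    rcases mem_swapped.mp he with h1 | h1 | ⟨h1, h1A, h1B⟩ <;>
      rcases mem_swapped.mp hf with h2 | h2 | ⟨h2, h2A, h2B⟩
    · exact absurd (h1.trans h2.symm) hef
    · subst h1; subst h2; exact hAB'
    · subst h1; exact (main f h2 h2A h2B).1
    · subst h1; subst h2
      exact ⟨hAB'.1.symm, hAB'.2.2.1.symm, hAB'.2.1.symm, hAB'.2.2.2.symm⟩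
    · exact absurd (h1.trans h2.symm) hef
    · subst h1; exact (main f h2 h2A h2B).2
    · subst h2
      have := (main e h1 h1A h1B).1
      exact ⟨this.1.symm, this.2.2.1.symm, this.2.1.symm, this.2.2.2.symm⟩
    · subst h2
      have := (main e h1 h1A h1B).2
      exact ⟨this.1.symm, this.2.2.1.symm, this.2.1.symm, this.2.2.2.symm⟩
    · exact hPM.2.2 e h1 f h2 hef

end SPM
end Part2
section Part3
set_option maxRecDepth 10000
open Finset
namespace SPM

variable {n : ℕ} {ζ : Finset (Fin n × Fin n)} {A B : Fin n × Fin n}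

lemma crossing_val {e f : Fin n × Fin n} :
    crossing e f ↔ ((e.1 : ℕ) < (f.1 : ℕ) ∧ (f.1 : ℕ) < (e.2 : ℕ) ∧ (e.2 : ℕ) < (f.2 : ℕ)) ∨
      ((f.1 : ℕ) < (e.1 : ℕ) ∧ (e.1 : ℕ) < (f.2 : ℕ) ∧ (f.2 : ℕ) < (e.2 : ℕ)) := by
  unfold crossing
  simp only [Fin.lt_def]

lemma pair_ne_of_fst {a b c d : Fin n} (h : (a : ℕ) ≠ (c : ℕ)) : (a, b) ≠ (c, d) := by
  intro h2
  exact h (congrArg (fun p => ((p.1 : Fin n) : ℕ)) h2)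

lemma spec_swapped (hPM : IsPM ζ) (hS : Spec ζ A B) :
    Spec (swapped ζ A B) (A.1, B.2) (B.1, A.2) := by
  obtain ⟨h2v, hB1, h2w, hvw⟩ := spec_facts hPM hS
  refine ⟨mem_swapped.mpr (Or.inl rfl), mem_swapped.mpr (Or.inr (Or.inl rfl)),
    show (B.2 : ℕ) ≠ (A.1 : ℕ) + 1 by omega,
    show (B.1 : ℕ) = (A.1 : ℕ) + 1 by omega, ?_⟩
  intro e he hena
  rcases mem_swapped.mp he with h | h | ⟨h, hA, hB⟩
  · rw [h]
  · rw [h]; show (A.1 : ℕ) ≤ (B.1 : ℕ); omega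
  · rcases spec_dich hPM hS h hA hB with ⟨hadj, _⟩ | ⟨hge, _⟩
    · exact absurd hadj hena
    · show (A.1 : ℕ) ≤ (e.1 : ℕ); omega

lemma swapped_swapped (hPM : IsPM ζ) (hS : Spec ζ A B) :
    swapped (swapped ζ A B) (A.1, B.2) (B.1, A.2) = ζ := by
  have hnm := new_notMem hPM hS
  ext e
  rw [mem_swapped]
  constructor
  · rintro (h | h | ⟨h, hA', hB'⟩)
    · rw [h]; exact hS.1
    · rw [h]; exact hS.2.1
    · rcases mem_swapped.mp h with h2 | h2 | ⟨h2, _, _⟩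
      · exact absurd h2 hA'
      · exact absurd h2 hB'
      · exact h2
  · intro he
    by_cases heA : e = A
    · left; rw [heA]
    by_cases heB : e = B
    · right; left; rw [heB]
    · refine Or.inr (Or.inr ⟨mem_swapped.mpr (Or.inr (Or.inr ⟨he, heA, heB⟩)), ?_, ?_⟩)
      · intro h; exact hnm.1 (h ▸ he)
      · intro h; exact hnm.2 (h ▸ he)

/-- The set counted by `crossNum`. -/
noncomputable def Xset (ζ : Finset (Fin n × Fin n)) :
    Finset ((Fin n × Fin n) × (Fin n × Fin n)) :=
  (ζ ×ˢ ζ).filter fun q => q.1.1 < q.2.1 ∧ crossing q.1 q.2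

lemma crossNum_eq (ζ : Finset (Fin n × Fin n)) : crossNum ζ = (Xset ζ).card := rfl

def rho (A B x : Fin n × Fin n) : Fin n × Fin n :=
  if x = A then (B.1, A.2) else if x = B then (A.1, B.2) else x

def rho' (A B x : Fin n × Fin n) : Fin n × Fin n :=
  if x = (A.1, B.2) then B else if x = (B.1, A.2) then A else x

lemma rho'_rho (hPM : IsPM ζ) (hS : Spec ζ A B) {x : Fin n × Fin n} (hx : x ∈ ζ) :
    rho' A B (rho A B x) = x := by
  obtain ⟨h2v, hB1, h2w, hvw⟩ := spec_facts hPM hS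
  have hBA'ne : ((B.1, A.2) : Fin n × Fin n) ≠ (A.1, B.2) := pair_ne_of_fst (by omega)
  by_cases hxA : x = A
  · rw [hxA]; simp [rho, rho', hBA'ne]
  by_cases hxB : x = B
  · rw [hxB]; simp [rho, rho', Ne.symm (spec_AB_ne hS)]
  · have hx1 : x ≠ (A.1, B.2) := fun h => (new_notMem hPM hS).1 (h ▸ hx)
    have hx2 : x ≠ (B.1, A.2) := fun h => (new_notMem hPM hS).2 (h ▸ hx)
    simp [rho, rho', hxA, hxB, hx1, hx2]

lemma rho_rho' (hPM : IsPM ζ) (hS : Spec ζ A B) {y : Fin n × Fin n}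
    (hy : y ∈ swapped ζ A B) : rho A B (rho' A B y) = y := by
  obtain ⟨h2v, hB1, h2w, hvw⟩ := spec_facts hPM hS
  have hBA'ne : ((B.1, A.2) : Fin n × Fin n) ≠ (A.1, B.2) := pair_ne_of_fst (by omega)
  rcases mem_swapped.mp hy with h | h | ⟨h, hA, hB⟩
  · rw [h]; simp [rho, rho', Ne.symm (spec_AB_ne hS)]
  · rw [h]; simp [rho, rho', hBA'ne]
  · have hy1 : y ≠ (A.1, B.2) := fun hh => (new_notMem hPM hS).1 (hh ▸ h)
    have hy2 : y ≠ (B.1, A.2) := fun hh => (new_notMem hPM hS).2 (hh ▸ h)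
    simp [rho, rho', hA, hB, hy1, hy2]

lemma hi_aux (hPM : IsPM ζ) (hS : Spec ζ A B) :
    ∀ q ∈ (Xset ζ).erase (A, B),
      (rho A B q.1, rho A B q.2) ∈ Xset (swapped ζ A B) := by
  obtain ⟨h2v, hB1, h2w, hvw⟩ := spec_facts hPM hS
  rintro ⟨e, f⟩ hq
  rw [mem_erase, Xset, mem_filter, mem_product] at hq
  dsimp only at hq
  obtain ⟨hqne, ⟨he, hf⟩, hord, hcr⟩ := hq
  have hord' : (e.1 : ℕ) < (f.1 : ℕ) := Fin.lt_def.mp hord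
  have hcr' := crossing_val.mp hcr
  show (rho A B e, rho A B f) ∈ Xset (swapped ζ A B)
  rw [Xset, mem_filter, mem_product]
  by_cases heA : e = A
  · by_cases hfB : f = B
    · exact absurd (by rw [heA, hfB]) hqne
    by_cases hfA : f = A
    · exfalso
      have h1 : (e.1 : ℕ) = (A.1 : ℕ) := by rw [heA]
      have h2 : (f.1 : ℕ) = (A.1 : ℕ) := by rw [hfA]
      omega
    · -- e = A, f = C : maps to ((B.1, A.2), C)
      have he1 : (e.1 : ℕ) = (A.1 : ℕ) := by rw [heA]
      have he2 : (e.2 : ℕ) = (A.2 : ℕ) := by rw [heA]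
      have hd := spec_dich hPM hS hf hfA hfB
      have hfo := Fin.lt_def.mp (hPM.1 f hf)
      have hρ1 : rho A B e = (B.1, A.2) := by rw [heA]; simp [rho]
      have hρ2 : rho A B f = f := by simp [rho, hfA, hfB]
      rw [hρ1, hρ2]
      refine ⟨⟨mem_swapped.mpr (Or.inr (Or.inl rfl)),
        mem_swapped.mpr (Or.inr (Or.inr ⟨hf, hfA, hfB⟩))⟩,
        Fin.lt_def.mpr (show (B.1 : ℕ) < (f.1 : ℕ) by omega),
        crossing_val.mpr ?_⟩
      show ((B.1 : ℕ) < (f.1 : ℕ) ∧ (f.1 : ℕ) < (A.2 : ℕ) ∧ (A.2 : ℕ) < (f.2 : ℕ)) ∨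
        ((f.1 : ℕ) < (B.1 : ℕ) ∧ (B.1 : ℕ) < (f.2 : ℕ) ∧ (f.2 : ℕ) < (A.2 : ℕ))
      omega
  by_cases heB : e = B
  · by_cases hfA : f = A
    · exfalso
      have h1 : (e.1 : ℕ) = (B.1 : ℕ) := by rw [heB]
      have h2 : (f.1 : ℕ) = (A.1 : ℕ) := by rw [hfA]
      omega
    by_cases hfB : f = B
    · exfalso
      have h1 : (e.1 : ℕ) = (B.1 : ℕ) := by rw [heB]
      have h2 : (f.1 : ℕ) = (B.1 : ℕ) := by rw [hfB]
      omega
    · -- e = B, f = C : maps to ((A.1, B.2), C)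
      have he1 : (e.1 : ℕ) = (B.1 : ℕ) := by rw [heB]
      have he2 : (e.2 : ℕ) = (B.2 : ℕ) := by rw [heB]
      have hd := spec_dich hPM hS hf hfA hfB
      have hfo := Fin.lt_def.mp (hPM.1 f hf)
      have hρ1 : rho A B e = (A.1, B.2) := by
        rw [heB]; simp [rho, Ne.symm (spec_AB_ne hS)]
      have hρ2 : rho A B f = f := by simp [rho, hfA, hfB]
      rw [hρ1, hρ2]
      refine ⟨⟨mem_swapped.mpr (Or.inl rfl),
        mem_swapped.mpr (Or.inr (Or.inr ⟨hf, hfA, hfB⟩))⟩,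
        Fin.lt_def.mpr (show (A.1 : ℕ) < (f.1 : ℕ) by omega),
        crossing_val.mpr ?_⟩
      show ((A.1 : ℕ) < (f.1 : ℕ) ∧ (f.1 : ℕ) < (B.2 : ℕ) ∧ (B.2 : ℕ) < (f.2 : ℕ)) ∨
        ((f.1 : ℕ) < (A.1 : ℕ) ∧ (A.1 : ℕ) < (f.2 : ℕ) ∧ (f.2 : ℕ) < (B.2 : ℕ))
      omega
  · -- e = C
    have hd := spec_dich hPM hS he heA heB
    have heo := Fin.lt_def.mp (hPM.1 e he)
    by_cases hfA : f = A
    · exfalso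
      have h1 : (f.1 : ℕ) = (A.1 : ℕ) := by rw [hfA]
      have h2 : (f.2 : ℕ) = (A.2 : ℕ) := by rw [hfA]
      omega
    by_cases hfB : f = B
    · exfalso
      have h1 : (f.1 : ℕ) = (B.1 : ℕ) := by rw [hfB]
      have h2 : (f.2 : ℕ) = (B.2 : ℕ) := by rw [hfB]
      omega
    · have hρ1 : rho A B e = e := by simp [rho, heA, heB]
      have hρ2 : rho A B f = f := by simp [rho, hfA, hfB]
      rw [hρ1, hρ2]
      exact ⟨⟨mem_swapped.mpr (Or.inr (Or.inr ⟨he, heA, heB⟩)),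
        mem_swapped.mpr (Or.inr (Or.inr ⟨hf, hfA, hfB⟩))⟩, hord, hcr⟩

lemma hj_aux (hPM : IsPM ζ) (hS : Spec ζ A B) (hvw2 : (A.2 : ℕ) < (B.2 : ℕ)) :
    ∀ q ∈ Xset (swapped ζ A B),
      (rho' A B q.1, rho' A B q.2) ∈ (Xset ζ).erase (A, B) := by
  obtain ⟨h2v, hB1, h2w, hvw⟩ := spec_facts hPM hS
  have hBA'ne : ((B.1, A.2) : Fin n × Fin n) ≠ (A.1, B.2) := pair_ne_of_fst (by omega)
  have hnm := new_notMem hPM hS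
  rintro ⟨e, f⟩ hq
  rw [Xset, mem_filter, mem_product] at hq
  dsimp only at hq
  obtain ⟨⟨he, hf⟩, hord, hcr⟩ := hq
  have hord' : (e.1 : ℕ) < (f.1 : ℕ) := Fin.lt_def.mp hord
  have hcr' := crossing_val.mp hcr
  show (rho' A B e, rho' A B f) ∈ (Xset ζ).erase (A, B)
  rw [mem_erase, Xset, mem_filter, mem_product]
  rcases mem_swapped.mp he with h1 | h1 | ⟨h1, h1A, h1B⟩ <;>
    rcases mem_swapped.mp hf with h2 | h2 | ⟨h2, h2A, h2B⟩
  · -- e = A', f = A'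
    exfalso
    have a1 : (e.1 : ℕ) = (A.1 : ℕ) := by rw [h1]
    have a2 : (f.1 : ℕ) = (A.1 : ℕ) := by rw [h2]
    omega
  · -- e = A', f = B' : no crossing since A.2 < B.2
    exfalso
    have a1 : (e.1 : ℕ) = (A.1 : ℕ) := by rw [h1]
    have a2 : (e.2 : ℕ) = (B.2 : ℕ) := by rw [h1]
    have a3 : (f.1 : ℕ) = (B.1 : ℕ) := by rw [h2]
    have a4 : (f.2 : ℕ) = (A.2 : ℕ) := by rw [h2]
    omega
  · -- e = A', f = C : maps to (B, C)
    have a1 : (e.1 : ℕ) = (A.1 : ℕ) := by rw [h1]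
    have a2 : (e.2 : ℕ) = (B.2 : ℕ) := by rw [h1]
    have hd := spec_dich hPM hS h2 h2A h2B
    have hfo := Fin.lt_def.mp (hPM.1 f h2)
    have hρ1 : rho' A B e = B := by rw [h1]; simp [rho']
    have hρ2 : rho' A B f = f := by
      have hy1 : f ≠ (A.1, B.2) := fun hh => hnm.1 (hh ▸ h2)
      have hy2 : f ≠ (B.1, A.2) := fun hh => hnm.2 (hh ▸ h2)
      simp [rho', hy1, hy2]
    rw [hρ1, hρ2]
    refine ⟨?_, ⟨hS.2.1, h2⟩,
      Fin.lt_def.mpr (show (B.1 : ℕ) < (f.1 : ℕ) by omega), crossing_val.mpr ?_⟩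
    · intro hh
      have h9 : (B.1 : ℕ) = (A.1 : ℕ) := by
        have := congrArg (fun p => ((p.1.1 : Fin n) : ℕ)) hh
        exact this
      omega
    · show ((B.1 : ℕ) < (f.1 : ℕ) ∧ (f.1 : ℕ) < (B.2 : ℕ) ∧ (B.2 : ℕ) < (f.2 : ℕ)) ∨
        ((f.1 : ℕ) < (B.1 : ℕ) ∧ (B.1 : ℕ) < (f.2 : ℕ) ∧ (f.2 : ℕ) < (B.2 : ℕ))
      omega
  · -- e = B', f = A'
    exfalso
    have a1 : (e.1 : ℕ) = (B.1 : ℕ) := by rw [h1]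
    have a2 : (f.1 : ℕ) = (A.1 : ℕ) := by rw [h2]
    omega
  · -- e = B', f = B'
    exfalso
    have a1 : (e.1 : ℕ) = (B.1 : ℕ) := by rw [h1]
    have a2 : (f.1 : ℕ) = (B.1 : ℕ) := by rw [h2]
    omega
  · -- e = B', f = C : maps to (A, C)
    have a1 : (e.1 : ℕ) = (B.1 : ℕ) := by rw [h1]
    have a2 : (e.2 : ℕ) = (A.2 : ℕ) := by rw [h1]
    have hd := spec_dich hPM hS h2 h2A h2B
    have hfo := Fin.lt_def.mp (hPM.1 f h2)
    have hρ1 : rho' A B e = A := by rw [h1]; simp [rho', hBA'ne]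
    have hρ2 : rho' A B f = f := by
      have hy1 : f ≠ (A.1, B.2) := fun hh => hnm.1 (hh ▸ h2)
      have hy2 : f ≠ (B.1, A.2) := fun hh => hnm.2 (hh ▸ h2)
      simp [rho', hy1, hy2]
    rw [hρ1, hρ2]
    refine ⟨?_, ⟨hS.1, h2⟩,
      Fin.lt_def.mpr (show (A.1 : ℕ) < (f.1 : ℕ) by omega), crossing_val.mpr ?_⟩
    · intro hh
      exact h2B (congrArg Prod.snd hh)
    · show ((A.1 : ℕ) < (f.1 : ℕ) ∧ (f.1 : ℕ) < (A.2 : ℕ) ∧ (A.2 : ℕ) < (f.2 : ℕ)) ∨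
        ((f.1 : ℕ) < (A.1 : ℕ) ∧ (A.1 : ℕ) < (f.2 : ℕ) ∧ (f.2 : ℕ) < (A.2 : ℕ))
      omega
  · -- e = C, f = A'
    exfalso
    have hd := spec_dich hPM hS h1 h1A h1B
    have heo := Fin.lt_def.mp (hPM.1 e h1)
    have a1 : (f.1 : ℕ) = (A.1 : ℕ) := by rw [h2]
    have a2 : (f.2 : ℕ) = (B.2 : ℕ) := by rw [h2]
    omega
  · -- e = C, f = B'
    exfalso
    have hd := spec_dich hPM hS h1 h1A h1B
    have heo := Fin.lt_def.mp (hPM.1 e h1)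
    have a1 : (f.1 : ℕ) = (B.1 : ℕ) := by rw [h2]
    have a2 : (f.2 : ℕ) = (A.2 : ℕ) := by rw [h2]
    omega
  · -- e = C, f = C'
    have hρ1 : rho' A B e = e := by
      have hy1 : e ≠ (A.1, B.2) := fun hh => hnm.1 (hh ▸ h1)
      have hy2 : e ≠ (B.1, A.2) := fun hh => hnm.2 (hh ▸ h1)
      simp [rho', hy1, hy2]
    have hρ2 : rho' A B f = f := by
      have hy1 : f ≠ (A.1, B.2) := fun hh => hnm.1 (hh ▸ h2)
      have hy2 : f ≠ (B.1, A.2) := fun hh => hnm.2 (hh ▸ h2)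
      simp [rho', hy1, hy2]
    rw [hρ1, hρ2]
    refine ⟨?_, ⟨h1, h2⟩, hord, hcr⟩
    intro hh
    exact h1A (congrArg Prod.fst hh)

lemma crossNum_swapped (hPM : IsPM ζ) (hS : Spec ζ A B) (hvw2 : (A.2 : ℕ) < (B.2 : ℕ)) :
    crossNum ζ = crossNum (swapped ζ A B) + 1 := by
  obtain ⟨h2v, hB1, h2w, hvw⟩ := spec_facts hPM hS
  have hmem : (A, B) ∈ Xset ζ := by
    rw [Xset, mem_filter, mem_product]
    refine ⟨⟨hS.1, hS.2.1⟩, Fin.lt_def.mpr (show (A.1 : ℕ) < (B.1 : ℕ) by omega),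
      crossing_val.mpr ?_⟩
    show ((A.1 : ℕ) < (B.1 : ℕ) ∧ (B.1 : ℕ) < (A.2 : ℕ) ∧ (A.2 : ℕ) < (B.2 : ℕ)) ∨
      ((B.1 : ℕ) < (A.1 : ℕ) ∧ (A.1 : ℕ) < (B.2 : ℕ) ∧ (B.2 : ℕ) < (A.2 : ℕ))
    omega
  have hcard : ((Xset ζ).erase (A, B)).card = (Xset (swapped ζ A B)).card := by
    refine Finset.card_bij' (fun q _ => (rho A B q.1, rho A B q.2))
      (fun q _ => (rho' A B q.1, rho' A B q.2)) (hi_aux hPM hS) (hj_aux hPM hS hvw2) ?_ ?_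
    · intro q hq
      rw [mem_erase, Xset, mem_filter, mem_product] at hq
      exact Prod.ext (rho'_rho hPM hS hq.2.1.1) (rho'_rho hPM hS hq.2.1.2)
    · intro q hq
      rw [Xset, mem_filter, mem_product] at hq
      exact Prod.ext (rho_rho' hPM hS hq.1.1) (rho_rho' hPM hS hq.1.2)
  rw [crossNum_eq, crossNum_eq, ← Finset.card_erase_add_one hmem, hcard]

lemma msign_swapped (hPM : IsPM ζ) (hS : Spec ζ A B) :
    msign (swapped ζ A B) = - msign ζ := by
  obtain ⟨h2v, hB1, h2w, hvw⟩ := spec_facts hPM hS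
  rcases lt_or_gt_of_ne hvw with h | h
  · have := crossNum_swapped hPM hS h
    rw [msign, msign, this, pow_succ]
    ring
  · have h2 := crossNum_swapped (isPM_swapped hPM hS) (spec_swapped hPM hS)
      (show (((A.1, B.2) : Fin n × Fin n).2 : ℕ) < (((B.1, A.2) : Fin n × Fin n).2 : ℕ) from h)
    rw [swapped_swapped hPM hS] at h2
    rw [msign, msign, h2, pow_succ]
    ring

end SPM
end Part3
section Part4
set_option maxRecDepth 10000
open Finset
namespace SPM

variable {n : ℕ} {ζ : Finset (Fin n × Fin n)}

lemma exists_spec (hPM : IsPM ζ) (hne : ∃ e ∈ ζ, (e.2 : ℕ) ≠ (e.1 : ℕ) + 1) :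
    ∃ p : (Fin n × Fin n) × (Fin n × Fin n), Spec ζ p.1 p.2 := by
  classical
  set T := ζ.filter (fun e => (e.2 : ℕ) ≠ (e.1 : ℕ) + 1) with hT
  have hTne : T.Nonempty := by
    obtain ⟨e, he, hna⟩ := hne
    exact ⟨e, mem_filter.mpr ⟨he, hna⟩⟩
  have humem := (T.image Prod.fst).min'_mem (hTne.image _)
  obtain ⟨A, hAT, hA1⟩ := mem_image.mp humem
  have hAζ := (mem_filter.mp hAT).1
  have hAna : (A.2 : ℕ) ≠ (A.1 : ℕ) + 1 := (mem_filter.mp hAT).2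
  have hmin : ∀ e ∈ ζ, (e.2 : ℕ) ≠ (e.1 : ℕ) + 1 → (A.1 : ℕ) ≤ (e.1 : ℕ) := by
    intro e he hena
    have h1 : (T.image Prod.fst).min' (hTne.image _) ≤ e.1 :=
      Finset.min'_le _ _ (mem_image_of_mem Prod.fst (mem_filter.mpr ⟨he, hena⟩))
    rw [hA1]
    exact Fin.le_def.mp h1
  have hAo := Fin.lt_def.mp (hPM.1 A hAζ)
  have h2v : (A.1 : ℕ) + 2 ≤ (A.2 : ℕ) := by omega
  have hlt : (A.1 : ℕ) + 1 < n := by have := A.2.isLt; omega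
  obtain ⟨B, hBζ, hx⟩ := hPM.2.1 ⟨(A.1 : ℕ) + 1, hlt⟩
  have hBo := Fin.lt_def.mp (hPM.1 B hBζ)
  rcases hx with hx | hx
  · have hB1 : (B.1 : ℕ) = (A.1 : ℕ) + 1 := (congrArg Fin.val hx).symm
    exact ⟨(A, B), hAζ, hBζ, hAna, hB1, hmin⟩
  · exfalso
    have hB2 : (B.2 : ℕ) = (A.1 : ℕ) + 1 := (congrArg Fin.val hx).symm
    by_cases hBA : B = A
    · rw [hBA] at hB2; omega
    · have hd := hPM.2.2 B hBζ A hAζ hBA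
      have hB1A1 : (B.1 : ℕ) ≠ (A.1 : ℕ) := fun h => hd.1 (Fin.ext h)
      have hBna : (B.2 : ℕ) ≠ (B.1 : ℕ) + 1 := by omega
      have := hmin B hBζ hBna
      omega

lemma swapped_choice_eq (hPM : IsPM ζ) {A B : Fin n × Fin n} (hp : Spec ζ A B)
    (h : ∃ q : (Fin n × Fin n) × (Fin n × Fin n), Spec ζ q.1 q.2) :
    swapped ζ h.choose.1 h.choose.2 = swapped ζ A B := by
  obtain ⟨e1, e2⟩ := spec_unique hPM h.choose_spec hp
  rw [e1, e2]

lemma msign_nested (m : ℕ) : msign (nested m) = 1 := by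
  rw [msign, crossNum_nested, pow_zero]

end SPM
end Part4


open SPM

/-- For any even positive integer `p = 2m`, the signed sum over all perfect matchings
of `{1, …, p}` equals `1`. -/
theorem signed_sum_of_matchings_even (m : ℕ) (hm : 0 < m) :
    ∑ ζ ∈ PMs (2 * m), msign ζ = 1 := by
  classical
  have hνPM : nested m ∈ PMs (2 * m) := mem_filter.mpr ⟨mem_univ _, isPM_nested m⟩
  rw [← Finset.add_sum_erase _ msign hνPM, msign_nested]
  have hPMof : ∀ ζ' ∈ (PMs (2 * m)).erase (nested m), IsPM ζ' :=
    fun ζ' h => (mem_filter.mp (mem_of_mem_erase h)).2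
  have hpair : ∀ ζ' ∈ (PMs (2 * m)).erase (nested m),
      ∃ p : (Fin (2*m) × Fin (2*m)) × (Fin (2*m) × Fin (2*m)), Spec ζ' p.1 p.2 := by
    intro ζ' h
    apply exists_spec (hPMof ζ' h)
    by_contra hall
    push_neg at hall
    exact (ne_of_mem_erase h) (eq_nested_of_adj (hPMof ζ' h) hall)
  have hgmem : ∀ a (ha : a ∈ (PMs (2 * m)).erase (nested m)),
      swapped a (hpair a ha).choose.1 (hpair a ha).choose.2 ∈
        (PMs (2 * m)).erase (nested m) := by
    intro a ha
    have hS := (hpair a ha).choose_spec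
    have hPMa := hPMof a ha
    rw [mem_erase]
    constructor
    · intro heq
      have h1 : ((hpair a ha).choose.1.1, (hpair a ha).choose.2.2) ∈
          swapped a (hpair a ha).choose.1 (hpair a ha).choose.2 :=
        mem_swapped.mpr (Or.inl rfl)
      rw [heq] at h1
      have hadj : ((hpair a ha).choose.2.2 : ℕ) = ((hpair a ha).choose.1.1 : ℕ) + 1 :=
        nested_adj h1
      have hfacts := spec_facts hPMa hS
      omega
    · exact mem_filter.mpr ⟨mem_univ _, isPM_swapped hPMa hS⟩
  have hz : ∑ ζ ∈ (PMs (2 * m)).erase (nested m), msign ζ = 0 := by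
    refine Finset.sum_involution
      (fun ζ' hζ' => swapped ζ' (hpair ζ' hζ').choose.1 (hpair ζ' hζ').choose.2)
      ?_ ?_ ?_ ?_
    · intro a ha
      have hS := (hpair a ha).choose_spec
      have h1 := msign_swapped (hPMof a ha) hS
      rw [h1]; ring
    · intro a ha _
      have hS := (hpair a ha).choose_spec
      intro heq
      have h1 : ((hpair a ha).choose.1.1, (hpair a ha).choose.2.2) ∈
          swapped a (hpair a ha).choose.1 (hpair a ha).choose.2 :=
        mem_swapped.mpr (Or.inl rfl)
      rw [heq] at h1
      exact (new_notMem (hPMof a ha) hS).1 h1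
    · exact hgmem
    · intro a ha
      have hS := (hpair a ha).choose_spec
      have hPMa := hPMof a ha
      have hPMb : IsPM (swapped a (hpair a ha).choose.1 (hpair a ha).choose.2) :=
        isPM_swapped hPMa hS
      have hSb := spec_swapped hPMa hS
      have key : ∀ hb : swapped a (hpair a ha).choose.1 (hpair a ha).choose.2 ∈
          (PMs (2 * m)).erase (nested m),
          swapped (swapped a (hpair a ha).choose.1 (hpair a ha).choose.2)
            (hpair _ hb).choose.1 (hpair _ hb).choose.2 = a := by
        intro hb
        rw [swapped_choice_eq hPMb hSb (hpair _ hb)]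
        exact swapped_swapped hPMa hS
      exact key (hgmem a ha)
  rw [hz, add_zero]
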